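/- For a random Cartesian tree built from a uniformly random permutation of [n], each node has probability converging to 1/3 of being binary (two children), 1/3 of being a leaf, 1/6 of having only a left child, and 1/6 of having only a right child; more precisely, the expected number of leaves in the random BST on n nodes equals (n+1)/3 for n ≥ 2. -/

import Mathlib

open Filter Real

/-- Binary trees: empty (`leaf`) or a node with left and right subtrees. -/
inductive BinTree where
  | leaf : BinTree
  | node : BinTree → BinTree → BinTree
deriving DecidableEq, Repr

namespace BinTree

/-- Number of nodes. -/
def size : BinTree → ℕ
  | leaf => 0
  | node l r => l.size + r.size + 1

/-- Product of subtree sizes over all nodes: `∏_{v∈t} st(v)`. -/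
def stProd : BinTree → ℕ
  | leaf => 1
  | node l r => (node l r).size * l.stProd * r.stProd

/-- Subtree-size entropy: `H_st(t) = ∑_{v∈t} lg st(v)`. -/
noncomputable def stEntropy : BinTree → ℝ
  | leaf => 0
  | node l r => Real.logb 2 ((node l r).size : ℝ) + l.stEntropy + r.stEntropy

/-- Size of the left subtree of the root. -/
def leftSize : BinTree → ℕ
  | leaf => 0
  | node l _ => l.size

/-- Every node has at most one (nonempty) child. -/
def isPath : BinTree → Prop
  | leaf => True
  | node l r => (l = leaf ∨ r = leaf) ∧ l.isPath ∧ r.isPath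

/-- At every node the sizes of the two subtrees differ by at most 1. -/
def isBalanced : BinTree → Prop
  | leaf => True
  | node l r => ((l.size : ℤ) - (r.size : ℤ)).natAbs ≤ 1 ∧ l.isBalanced ∧ r.isBalanced

/-- Number of leaves (nodes with no children). -/
def leafCount : BinTree → ℕ
  | leaf => 0
  | node l r => (if l = leaf ∧ r = leaf then 1 else 0) + l.leafCount + r.leafCount

/-- Number of binary nodes (both children present). -/
def binCount : BinTree → ℕ
  | leaf => 0
  | node l r => (if l ≠ leaf ∧ r ≠ leaf then 1 else 0) + l.binCount + r.binCount

/-- Number of nodes with only a left child. -/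
def leftOnlyCount : BinTree → ℕ
  | leaf => 0
  | node l r => (if l ≠ leaf ∧ r = leaf then 1 else 0) + l.leftOnlyCount + r.leftOnlyCount

/-- Number of nodes with only a right child. -/
def rightOnlyCount : BinTree → ℕ
  | leaf => 0
  | node l r => (if l = leaf ∧ r ≠ leaf then 1 else 0) + l.rightOnlyCount + r.rightOnlyCount

end BinTree

/-- Cartesian tree construction with explicit fuel (fuel ≥ length suffices). -/
def cartesianAux : ℕ → List ℕ → BinTree
  | 0, _ => .leaf
  | _ + 1, [] => .leaf
  | fuel + 1, x :: xs =>
      let m := List.foldl min x xs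
      let i := (x :: xs).idxOf m
      .node (cartesianAux fuel ((x :: xs).take i)) (cartesianAux fuel ((x :: xs).drop (i + 1)))

/-- The Cartesian tree of a list: root at the (first) minimum, left/right
subtrees built recursively from the prefix/suffix. -/
def cartesian (l : List ℕ) : BinTree := cartesianAux l.length l

/-- The array `A[1..n]` (as a list) associated with a permutation of `Fin n`. -/
def permList {n : ℕ} (p : Equiv.Perm (Fin n)) : List ℕ := List.ofFn fun k => (p k : ℕ)

/-- All binary trees with exactly `n` nodes. -/
def treesOfSize : ℕ → Finset BinTree
  | 0 => {BinTree.leaf}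
  | n + 1 =>
    (Finset.range (n + 1)).attach.biUnion fun i =>
      ((treesOfSize i.1) ×ˢ (treesOfSize (n - i.1))).image fun p => BinTree.node p.1 p.2
termination_by n => n
decreasing_by
  · exact Nat.lt_succ_of_le (Nat.le_of_lt_succ (Finset.mem_range.mp i.2))
  · exact Nat.lt_succ_of_le (Nat.sub_le n i.1)

/-- Shannon entropy (base 2) of the random-BST shape distribution on `n` nodes,
which assigns probability `1/stProd t` to each tree `t` on `n` nodes. -/
noncomputable def shapeEntropy (n : ℕ) : ℝ :=
  - ∑ t ∈ treesOfSize n, (1 / (t.stProd : ℝ)) * Real.logb 2 (1 / (t.stProd : ℝ))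

/-- Expectation of `f` under the random-BST shape distribution on `n` nodes. -/
noncomputable def expCount (f : BinTree → ℕ) (n : ℕ) : ℝ :=
  ∑ t ∈ treesOfSize n, (1 / (t.stProd : ℝ)) * (f t : ℝ)

/-- The entropy recurrence: `H 0 = H 1 = 0`, `H n = lg n + (2/n) ∑_{i<n} H i`. -/
noncomputable def Hrec : ℕ → ℝ
  | 0 => 0
  | 1 => 0
  | n + 2 =>
      Real.logb 2 ((n + 2 : ℕ) : ℝ) +
        (2 / ((n + 2 : ℕ) : ℝ)) * ∑ i ∈ (Finset.range (n + 2)).attach, Hrec i.1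
termination_by n => n
decreasing_by exact Finset.mem_range.mp i.2

/-- `rmq_A(i,j)` (1-based): the position of the (first) minimum of `A[i..j]`. -/
def rmqFun (A : List ℕ) (i j : ℕ) : ℕ :=
  let s := (A.drop (i - 1)).take (j - i + 1)
  i + s.idxOf (List.foldl min (s.headD 0) s)

/-- The inorder rank of the LCA of the nodes with inorder ranks `i` and `j`. -/
def lcaInorder : BinTree → ℕ → ℕ → ℕ
  | .leaf, _, _ => 0
  | .node l r, i, j =>
      let m := l.size + 1
      if i < m ∧ j < m then lcaInorder l i j
      else if m < i ∧ m < j then m + lcaInorder r (i - m) (j - m)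
      else m

/-- The subtree rooted at the node reached from the root by the given
left(`false`)/right(`true`) directions, if it exists. -/
def subAt : BinTree → List Bool → Option BinTree
  | t, [] => some t
  | .leaf, _ :: _ => none
  | .node l _, false :: p => subAt l p
  | .node _ r, true :: p => subAt r p

/-- Subtree size of the node at a position (0 if there is no node there). -/
def stAt (t : BinTree) (pos : List Bool) : ℕ := ((subAt t pos).getD .leaf).size

/-- Left-subtree size of the node at a position. -/
def lsAt (t : BinTree) (pos : List Bool) : ℕ := ((subAt t pos).getD .leaf).leftSize

/-- `Pruned μ s`: `μ` is obtained from `s` by replacing some subtrees by `leaf`. -/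
inductive Pruned : BinTree → BinTree → Prop
  | leaf (t) : Pruned .leaf t
  | node {l' r' l r} : Pruned l' l → Pruned r' r → Pruned (.node l' r') (.node l r)

/-- `PrunedN k μ s`: `μ` is obtained from `s` by pruning exactly `k` (nonempty) subtrees. -/
inductive PrunedN : ℕ → BinTree → BinTree → Prop
  | refl (t) : PrunedN 0 t t
  | prune (l r) : PrunedN 1 .leaf (.node l r)
  | node {a b l' r' l r} : PrunedN a l' l → PrunedN b r' r → PrunedN (a + b) (.node l' r') (.node l r)

/-- `IsSubtree s t`: `s` is the subtree of `t` rooted at some node (or `t` itself). -/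
inductive IsSubtree : BinTree → BinTree → Prop
  | refl (t) : IsSubtree t t
  | left {s l r} : IsSubtree s l → IsSubtree s (.node l r)
  | right {s l r} : IsSubtree s r → IsSubtree s (.node l r)

/-- `∑_{v∈μ} lg st_s(v)`: sum over the nodes of `μ` of the log-subtree-sizes
taken in the host tree `s` (for `μ` pruned from `s`). -/
noncomputable def mixedEntropy : BinTree → BinTree → ℝ
  | .leaf, _ => 0
  | .node _ _, .leaf => 0
  | .node l' r', .node l r =>
      Real.logb 2 ((BinTree.node l r).size : ℝ) + mixedEntropy l' l + mixedEntropy r' r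

/-- 1-based preorder index of the node at a position (0 if no node there). -/
def preorderIdx : BinTree → List Bool → ℕ
  | _, [] => 1
  | .leaf, _ :: _ => 0
  | .node l _, false :: p => 1 + preorderIdx l p
  | .node l r, true :: p => 1 + l.size + preorderIdx r p

/-- 1-based inorder index of the node at a position. -/
def inorderIdx : BinTree → List Bool → ℕ
  | t, [] => t.leftSize + 1
  | .leaf, _ :: _ => 0
  | .node l _, false :: p => inorderIdx l p
  | .node l r, true :: p => l.size + 1 + inorderIdx r p

/-- Binary entropy function (base 2). -/
noncomputable def binH (x : ℝ) : ℝ := -x * Real.logb 2 x - (1 - x) * Real.logb 2 (1 - x)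

/-!
Weight the trees of size `n` by `1 / ∏ st(v)`. Splitting at the root, the rank of the root is
uniform on `{1, …, n}` and, given it, the two subtrees are independent random BSTs; this turns the
expectation of any additive functional into the usual toll recurrence. For the leaf count the toll
is paid only by the one-node tree, so `n L_n = [n = 1] + 2 ∑_{i<n} L_i`, whose differences give
`L_{n+1} / (n + 2) = L_n / (n + 1)` and hence `L_n = (n + 1) / 3` from `L_2 = 1`. A nonempty tree
has one more leaf than binary nodes, the four node types partition the `n` nodes, and mirroring
swaps left-only and right-only nodes while preserving the distribution; this pins all four
expectations down.
-/

open Finset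

namespace BinTree

noncomputable def prob (t : BinTree) : ℝ := 1 / t.stProd

lemma prob_node (l r : BinTree) :
    (node l r).prob = ((l.size + r.size + 1 : ℕ) : ℝ)⁻¹ * l.prob * r.prob := by
  simp only [prob, stProd, size]
  push_cast
  field_simp

def mirror : BinTree → BinTree
  | leaf => leaf
  | node l r => node r.mirror l.mirror

@[simp]
lemma mirror_mirror (t : BinTree) : t.mirror.mirror = t := by
  induction t with
  | leaf => rfl
  | node l r ihl ihr => simp [mirror, ihl, ihr]

@[simp]
lemma mirror_eq_leaf {t : BinTree} : t.mirror = leaf ↔ t = leaf := by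
  cases t <;> simp [mirror]

@[simp]
lemma size_mirror (t : BinTree) : t.mirror.size = t.size := by
  induction t with
  | leaf => rfl
  | node l r ihl ihr => simp only [mirror, size, ihl, ihr]; omega

@[simp]
lemma prob_mirror (t : BinTree) : t.mirror.prob = t.prob := by
  induction t with
  | leaf => rfl
  | node l r ihl ihr => simp only [mirror, prob_node, size_mirror, ihl, ihr]; ring_nf

lemma rightOnlyCount_mirror (t : BinTree) : t.mirror.rightOnlyCount = t.leftOnlyCount := by
  induction t with
  | leaf => rfl
  | node l r ihl ihr =>
    simp only [mirror, rightOnlyCount, leftOnlyCount, ihl, ihr, ne_eq, mirror_eq_leaf]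
    by_cases hl : l = leaf <;> by_cases hr : r = leaf <;> simp [hl, hr] <;> omega

lemma leafCount_eq_binCount_add_one {t : BinTree} (ht : t ≠ leaf) :
    t.leafCount = t.binCount + 1 := by
  induction t with
  | leaf => contradiction
  | node l r ihl ihr =>
    rcases l with _ | ⟨ll, lr⟩ <;> rcases r with _ | ⟨rl, rr⟩ <;>
      simp_all [leafCount, binCount]
    omega

lemma leafCount_add_binCount_add_leftOnlyCount_add_rightOnlyCount (t : BinTree) :
    t.leafCount + t.binCount + t.leftOnlyCount + t.rightOnlyCount = t.size := by
  induction t with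
  | leaf => rfl
  | node l r ihl ihr =>
    simp only [leafCount, binCount, leftOnlyCount, rightOnlyCount, size]
    split_ifs <;> simp_all <;> omega

end BinTree

open BinTree

lemma mem_treesOfSize {n : ℕ} {t : BinTree} : t ∈ treesOfSize n ↔ t.size = n := by
  induction n using Nat.strong_induction_on generalizing t with
  | _ n ih =>
    cases n with
    | zero => cases t <;> simp [treesOfSize, size]
    | succ n =>
      rw [treesOfSize]
      simp only [mem_biUnion, mem_attach, mem_image, mem_product, true_and, Subtype.exists,
        mem_range, Prod.exists]
      constructor
      · rintro ⟨i, hi, l, r, ⟨hl, hr⟩, rfl⟩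
        rw [ih i hi] at hl
        rw [ih (n - i) (by omega)] at hr
        simp only [size]
        omega
      · intro h
        cases t with
        | leaf => simp [size] at h
        | node l r =>
          simp only [size] at h
          exact ⟨l.size, by omega, l, r, ⟨(ih _ (by omega)).2 rfl, (ih _ (by omega)).2 (by omega)⟩,
            rfl⟩

lemma sum_treesOfSize_succ {M : Type*} [AddCommMonoid M] (g : BinTree → M) (n : ℕ) :
    ∑ t ∈ treesOfSize (n + 1), g t
      = ∑ i ∈ range (n + 1), ∑ l ∈ treesOfSize i, ∑ r ∈ treesOfSize (n - i), g (node l r) := by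
  rw [treesOfSize, sum_biUnion]
  · rw [← sum_attach (range (n + 1))]
    refine sum_congr rfl fun i _ => ?_
    rw [sum_image, sum_product]
    rintro ⟨a, b⟩ _ ⟨c, d⟩ _ h
    simpa [Prod.ext_iff] using h
  · rintro ⟨i, hi⟩ - ⟨j, hj⟩ - hij
    simp only [Function.onFun, disjoint_left, mem_image, mem_product, Prod.exists]
    rintro _ ⟨l, r, ⟨hl, -⟩, rfl⟩ ⟨l', r', ⟨hl', -⟩, he⟩
    cases he
    rw [mem_treesOfSize] at hl hl'
    exact hij (Subtype.ext (hl.symm.trans hl'))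

lemma sum_prob_treesOfSize (n : ℕ) : ∑ t ∈ treesOfSize n, t.prob = 1 := by
  induction n using Nat.strong_induction_on with
  | _ n ih =>
    cases n with
    | zero => simp [treesOfSize, prob, stProd]
    | succ n =>
      have hsplit : ∀ i ∈ range (n + 1),
          ∑ l ∈ treesOfSize i, ∑ r ∈ treesOfSize (n - i), (node l r).prob
            = ((n + 1 : ℕ) : ℝ)⁻¹ := by
        intro i hi
        rw [mem_range] at hi
        calc ∑ l ∈ treesOfSize i, ∑ r ∈ treesOfSize (n - i), (node l r).prob
            = ∑ l ∈ treesOfSize i, ∑ r ∈ treesOfSize (n - i),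
                ((n + 1 : ℕ) : ℝ)⁻¹ * (l.prob * r.prob) := by
              refine sum_congr rfl fun l hl => sum_congr rfl fun r hr => ?_
              rw [mem_treesOfSize] at hl hr
              rw [prob_node, mul_assoc, hl, hr, show i + (n - i) + 1 = n + 1 by omega]
          _ = ((n + 1 : ℕ) : ℝ)⁻¹
                * ((∑ l ∈ treesOfSize i, l.prob) * ∑ r ∈ treesOfSize (n - i), r.prob) := by
              simp_rw [sum_mul_sum, mul_sum]
          _ = ((n + 1 : ℕ) : ℝ)⁻¹ := by
              rw [ih i (by omega), ih (n - i) (by omega), mul_one, mul_one]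
      rw [sum_treesOfSize_succ, sum_congr rfl hsplit, sum_const, card_range, nsmul_eq_mul,
        mul_inv_cancel₀ (by positivity)]

noncomputable def shapeExpect (F : BinTree → ℝ) (n : ℕ) : ℝ :=
  ∑ t ∈ treesOfSize n, t.prob * F t

lemma expCount_eq_shapeExpect (f : BinTree → ℕ) (n : ℕ) :
    expCount f n = shapeExpect (fun t => f t) n := rfl

lemma shapeExpect_const (c : ℝ) (n : ℕ) : shapeExpect (fun _ => c) n = c := by
  rw [shapeExpect, ← sum_mul, sum_prob_treesOfSize, one_mul]

lemma shapeExpect_add (F G : BinTree → ℝ) (n : ℕ) :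
    shapeExpect (fun t => F t + G t) n = shapeExpect F n + shapeExpect G n := by
  simp only [shapeExpect, mul_add, sum_add_distrib]

lemma shapeExpect_congr {F G : BinTree → ℝ} {n : ℕ} (h : ∀ t, t.size = n → F t = G t) :
    shapeExpect F n = shapeExpect G n :=
  sum_congr rfl fun t ht => by rw [h t (mem_treesOfSize.1 ht)]

lemma shapeExpect_comp_mirror (F : BinTree → ℝ) (n : ℕ) :
    shapeExpect (fun t => F t.mirror) n = shapeExpect F n := by
  have hmem {t : BinTree} (ht : t ∈ treesOfSize n) : t.mirror ∈ treesOfSize n := by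
    rw [mem_treesOfSize] at ht ⊢
    rwa [size_mirror]
  refine sum_nbij' mirror mirror (fun _ => hmem) (fun _ => hmem) (fun t _ => mirror_mirror t)
    (fun t _ => mirror_mirror t) fun t _ => ?_
  rw [prob_mirror]

lemma sum_sum_prob_mul_prob_mul (G H : BinTree → ℝ) (i j : ℕ) :
    ∑ l ∈ treesOfSize i, ∑ r ∈ treesOfSize j, l.prob * r.prob * (G l * H r)
      = shapeExpect G i * shapeExpect H j := by
  rw [shapeExpect, shapeExpect, sum_mul_sum]
  exact sum_congr rfl fun _ _ => sum_congr rfl fun _ _ => by ring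

lemma shapeExpect_succ_of_toll (F : BinTree → ℝ) (c : BinTree → BinTree → ℝ)
    (hF : ∀ l r, F (node l r) = c l r + F l + F r) (n : ℕ) :
    (n + 1) * shapeExpect F (n + 1)
      = ∑ i ∈ range (n + 1), ∑ l ∈ treesOfSize i, ∑ r ∈ treesOfSize (n - i),
          l.prob * r.prob * c l r
        + 2 * ∑ i ∈ range (n + 1), shapeExpect F i := by
  have hsplit : ∀ i ∈ range (n + 1),
      ∑ l ∈ treesOfSize i, ∑ r ∈ treesOfSize (n - i), (node l r).prob * F (node l r)
        = ((n : ℝ) + 1)⁻¹ * (∑ l ∈ treesOfSize i, ∑ r ∈ treesOfSize (n - i),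
            l.prob * r.prob * c l r + shapeExpect F i + shapeExpect F (n - i)) := by
    intro i hi
    rw [mem_range] at hi
    have hF' := sum_sum_prob_mul_prob_mul F (fun _ => 1) i (n - i)
    have hF'' := sum_sum_prob_mul_prob_mul (fun _ => 1) F i (n - i)
    simp only [mul_one, one_mul, shapeExpect_const] at hF' hF''
    rw [← hF', ← hF'']
    simp only [← sum_add_distrib, mul_sum]
    refine sum_congr rfl fun l hl => sum_congr rfl fun r hr => ?_
    rw [mem_treesOfSize] at hl hr
    rw [prob_node, hF, hl, hr, show i + (n - i) + 1 = n + 1 by omega]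
    push_cast
    ring
  have hreflect : ∑ i ∈ range (n + 1), shapeExpect F (n - i)
      = ∑ i ∈ range (n + 1), shapeExpect F i := by
    simpa using sum_range_reflect (shapeExpect F) (n + 1)
  rw [shapeExpect, sum_treesOfSize_succ, sum_congr rfl hsplit, ← mul_sum, ← mul_assoc,
    mul_inv_cancel₀ (by positivity), one_mul, sum_add_distrib, sum_add_distrib, hreflect]
  ring

lemma expCount_leafCount_succ (n : ℕ) :
    (n + 1) * expCount leafCount (n + 1)
      = (if n = 0 then 1 else 0) + 2 * ∑ i ∈ range (n + 1), expCount leafCount i := by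
  have htoll : ∀ l r, ((node l r).leafCount : ℝ)
      = (if l = leaf ∧ r = leaf then 1 else 0) + l.leafCount + r.leafCount := by
    intro l r
    simp only [BinTree.leafCount]
    push_cast
    rfl
  simp only [expCount_eq_shapeExpect]
  rw [shapeExpect_succ_of_toll _ _ htoll]
  congr 1
  split_ifs with hn
  · subst hn
    rw [zero_add, sum_range_one, Nat.sub_zero]
    simp [treesOfSize, prob, stProd]
  · refine sum_eq_zero fun i hi => sum_eq_zero fun l hl => sum_eq_zero fun r hr => ?_
    rw [mem_range] at hi
    rw [mem_treesOfSize] at hl hr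
    rw [if_neg]
    · ring
    rintro ⟨rfl, rfl⟩
    simp only [size] at hl hr
    omega

/-- The recurrence `L₁ = 1`, `n Lₙ = 2 ∑_{i<n} Lᵢ` (`n ≥ 2`), shifted by one. -/
lemma eq_succ_div_three_of_recurrence (a : ℕ → ℝ) (h0 : a 0 = 0)
    (h : ∀ n : ℕ, (n + 1) * a (n + 1) = (if n = 0 then 1 else 0) + 2 * ∑ i ∈ range (n + 1), a i)
    (n : ℕ) (hn : 2 ≤ n) : a n = (n + 1) / 3 := by
  have h1 : a 1 = 1 := by simpa [h0] using h 0
  have h2 : a 2 = 1 := by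
    have h2 := h 1
    simp only [sum_range_succ, sum_range_zero, h0, h1] at h2
    norm_num at h2
    linarith
  have step (m : ℕ) : ((m : ℝ) + 3) * a (m + 3) = (m + 4) * a (m + 2) := by
    have hprev := h (m + 1)
    have hnext := h (m + 2)
    rw [if_neg (by omega)] at hprev hnext
    rw [sum_range_succ _ (m + 2), show m + 1 + 1 = m + 2 by ring] at *
    push_cast at hprev hnext
    linear_combination hnext - hprev
  obtain ⟨m, rfl⟩ : ∃ m, n = m + 2 := ⟨n - 2, by omega⟩
  clear hn
  push_cast
  induction m with
  | zero => rw [h2]; norm_num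
  | succ m ih =>
    apply mul_left_cancel₀ (show (m : ℝ) + 3 ≠ 0 by positivity)
    push_cast at ih ⊢
    rw [show m + 1 + 2 = m + 3 by ring, step m, ih]
    ring

lemma expCount_leafCount {n : ℕ} (hn : 2 ≤ n) : expCount leafCount n = (n + 1) / 3 :=
  eq_succ_div_three_of_recurrence (expCount leafCount ·)
    (by simp [expCount, treesOfSize, BinTree.leafCount]) expCount_leafCount_succ n hn

lemma expCount_binCount {n : ℕ} (hn : 1 ≤ n) :
    expCount binCount n = expCount leafCount n - 1 := by
  have : expCount leafCount n = expCount binCount n + 1 := by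
    simp only [expCount_eq_shapeExpect]
    rw [← shapeExpect_const 1 n, ← shapeExpect_add]
    refine shapeExpect_congr fun t ht => ?_
    have : t ≠ leaf := by rintro rfl; simp [size] at ht; omega
    rw [leafCount_eq_binCount_add_one this]
    push_cast
    rfl
  linarith

lemma expCount_leftOnlyCount_eq_rightOnlyCount (n : ℕ) :
    expCount leftOnlyCount n = expCount rightOnlyCount n := by
  simp only [expCount_eq_shapeExpect, ← rightOnlyCount_mirror]
  exact shapeExpect_comp_mirror (fun t => (t.rightOnlyCount : ℝ)) n

lemma expCount_leafCount_add_binCount_add_leftOnlyCount_add_rightOnlyCount (n : ℕ) :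
    expCount leafCount n + expCount binCount n + expCount leftOnlyCount n
      + expCount rightOnlyCount n = n := by
  simp only [expCount_eq_shapeExpect]
  rw [← shapeExpect_add, ← shapeExpect_add, ← shapeExpect_add, ← shapeExpect_const (n : ℝ) n]
  refine shapeExpect_congr fun t ht => ?_
  rw [← ht]
  exact_mod_cast leafCount_add_binCount_add_leftOnlyCount_add_rightOnlyCount t

lemma expCount_leftOnlyCount {n : ℕ} (hn : 2 ≤ n) : expCount leftOnlyCount n = (n + 1) / 6 := by
  have hsum := expCount_leafCount_add_binCount_add_leftOnlyCount_add_rightOnlyCount n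
  rw [expCount_binCount (by omega), ← expCount_leftOnlyCount_eq_rightOnlyCount,
    expCount_leafCount hn] at hsum
  linarith

lemma tendsto_div_natCast_of_eventually_eq {a : ℕ → ℝ} {c k : ℝ}
    (h : ∀ᶠ n : ℕ in atTop, a n = (n + c) / k) :
    Tendsto (fun n : ℕ => a n / n) atTop (nhds (1 / k)) := by
  have hlim : Tendsto (fun n : ℕ => 1 / k + c / k / n) atTop (nhds (1 / k)) := by
    simpa using tendsto_const_nhds.add (tendsto_const_div_atTop_nhds_zero_nat (c / k))
  refine hlim.congr' ?_
  filter_upwards [h, eventually_ne_atTop 0] with n hn hn0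
  rw [hn]
  field_simp

/-- For the random BST on `n` nodes: the expected number of leaves is `(n+1)/3`
for `n ≥ 2`; asymptotically a node is a leaf or a binary node with probability
→ 1/3 each, and has only a left (resp. only a right) child with probability
→ 1/6 each. -/
theorem stmt11 :
    (∀ n : ℕ, 2 ≤ n → expCount BinTree.leafCount n = ((n : ℝ) + 1) / 3)
    ∧ Filter.Tendsto (fun n : ℕ => expCount BinTree.leafCount n / (n : ℝ))
        Filter.atTop (nhds (1 / 3))
    ∧ Filter.Tendsto (fun n : ℕ => expCount BinTree.binCount n / (n : ℝ))
        Filter.atTop (nhds (1 / 3))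
    ∧ Filter.Tendsto (fun n : ℕ => expCount BinTree.leftOnlyCount n / (n : ℝ))
        Filter.atTop (nhds (1 / 6))
    ∧ Filter.Tendsto (fun n : ℕ => expCount BinTree.rightOnlyCount n / (n : ℝ))
        Filter.atTop (nhds (1 / 6)) := by
  refine ⟨fun n hn => expCount_leafCount hn, ?_, ?_, ?_, ?_⟩
  · exact tendsto_div_natCast_of_eventually_eq <|
      (eventually_ge_atTop 2).mono fun n hn => expCount_leafCount hn
  · refine tendsto_div_natCast_of_eventually_eq (c := -2) <|
      (eventually_ge_atTop 2).mono fun n hn => ?_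
    rw [expCount_binCount (by omega), expCount_leafCount hn]
    ring
  · exact tendsto_div_natCast_of_eventually_eq <|
      (eventually_ge_atTop 2).mono fun n hn => expCount_leftOnlyCount hn
  · simp_rw [← expCount_leftOnlyCount_eq_rightOnlyCount]
    exact tendsto_div_natCast_of_eventually_eq <|
      (eventually_ge_atTop 2).mono fun n hn => expCount_leftOnlyCount hn
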